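/- arXiv:2507.01167 — 2 statements merged into one kernel-verified Lean document; each statement's English description precedes it below -/
import Mathlib

section
/- Let A and B be n×n Hermitian matrices with eigenvalues λ₁(A) ≥ ... ≥ λₙ(A) and λ₁(B) ≥ ... ≥ λₙ(B) listed in decreasing order. Then for every index j, |λⱼ(A) − λⱼ(B)| ≤ ‖A − B‖, where ‖·‖ denotes the operator norm. -/
open Matrix

/-- Operator (spectral) norm of a complex square matrix. -/
noncomputable def opNormC {n : ℕ} (A : Matrix (Fin n) (Fin n) ℂ) : ℝ :=
  ‖Matrix.toEuclideanCLM (𝕜 := ℂ) A‖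

section WeylAux
open Finset
variable {n : ℕ}

noncomputable abbrev ff (M : Matrix (Fin n) (Fin n) ℂ) := Matrix.toEuclideanCLM (𝕜 := ℂ) M

lemma clm_apply_basis (M : Matrix (Fin n) (Fin n) ℂ) (hM : M.IsHermitian) (k : Fin n) :
    ff M (hM.eigenvectorBasis k) = (hM.eigenvalues k : ℂ) • hM.eigenvectorBasis k := by
  apply (WithLp.equiv 2 (Fin n → ℂ)).injective
  simp only [WithLp.equiv_apply, ofLp_toEuclideanCLM]
  have := hM.mulVec_eigenvectorBasis k
  ext i
  simpa using congrFun this i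

lemma repr_vanish (M : Matrix (Fin n) (Fin n) ℂ) (hM : M.IsHermitian) (S : Set (Fin n))
    (x : EuclideanSpace ℂ (Fin n)) (hx : x ∈ Submodule.span ℂ (hM.eigenvectorBasis '' S))
    (k : Fin n) (hk : k ∉ S) : hM.eigenvectorBasis.repr x k = 0 := by
  rw [hM.eigenvectorBasis.repr_apply_apply]
  induction hx using Submodule.span_induction with
  | mem y hy =>
    obtain ⟨i, hi, rfl⟩ := hy
    have := hM.eigenvectorBasis.orthonormal.2 (i := k) (j := i) (fun h => hk (h ▸ hi))
    simpa using this
  | zero => simp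
  | add y z _ _ hy hz => rw [inner_add_right, hy, hz, add_zero]
  | smul c y _ hy => rw [inner_smul_right, hy, mul_zero]

lemma quad_formula (M : Matrix (Fin n) (Fin n) ℂ) (hM : M.IsHermitian)
    (x : EuclideanSpace ℂ (Fin n)) :
    RCLike.re (inner ℂ x (ff M x) : ℂ)
      = ∑ k, hM.eigenvalues k * ‖hM.eigenvectorBasis.repr x k‖ ^ 2 := by
  set b := hM.eigenvectorBasis with hb
  have hfx : ff M x = ∑ k, (hM.eigenvalues k : ℂ) • b.repr x k • b k := by
    conv_lhs => rw [← b.sum_repr x]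
    rw [map_sum]
    refine Finset.sum_congr rfl fun k _ => ?_
    rw [(ff M).map_smul, clm_apply_basis M hM k, smul_comm]
  have h1 : (inner ℂ x (ff M x) : ℂ)
      = ∑ k, ((hM.eigenvalues k * ‖b.repr x k‖ ^ 2 : ℝ) : ℂ) := by
    rw [hfx, inner_sum]
    refine Finset.sum_congr rfl fun k _ => ?_
    rw [inner_smul_right, inner_smul_right]
    have hx1 : (inner ℂ x (b k) : ℂ) = starRingEnd ℂ (b.repr x k) := by
      rw [← inner_conj_symm, b.repr_apply_apply]
    rw [hx1, mul_comm (b.repr x k), Complex.conj_mul']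
    push_cast
    ring
  rw [h1, map_sum]
  refine Finset.sum_congr rfl fun k _ => ?_
  exact Complex.ofReal_re _

lemma norm_sq_formula (M : Matrix (Fin n) (Fin n) ℂ) (hM : M.IsHermitian)
    (x : EuclideanSpace ℂ (Fin n)) :
    ‖x‖ ^ 2 = ∑ k, ‖hM.eigenvectorBasis.repr x k‖ ^ 2 := by
  rw [← hM.eigenvectorBasis.repr.norm_map x, EuclideanSpace.norm_eq]
  rw [Real.sq_sqrt (by positivity)]

lemma quad_ge (M : Matrix (Fin n) (Fin n) ℂ) (hM : M.IsHermitian) (S : Finset (Fin n)) (c : ℝ)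
    (hc : ∀ k ∈ S, c ≤ hM.eigenvalues k) (x : EuclideanSpace ℂ (Fin n))
    (hx : x ∈ Submodule.span ℂ (hM.eigenvectorBasis '' ↑S)) :
    c * ‖x‖ ^ 2 ≤ RCLike.re (inner ℂ x (ff M x) : ℂ) := by
  rw [quad_formula M hM, norm_sq_formula M hM, Finset.mul_sum]
  apply Finset.sum_le_sum
  intro k _
  by_cases hk : k ∈ S
  · exact mul_le_mul_of_nonneg_right (hc k hk) (by positivity)
  · rw [repr_vanish M hM ↑S x hx k hk]; simp

lemma quad_le (M : Matrix (Fin n) (Fin n) ℂ) (hM : M.IsHermitian) (S : Finset (Fin n)) (c : ℝ)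
    (hc : ∀ k ∈ S, hM.eigenvalues k ≤ c) (x : EuclideanSpace ℂ (Fin n))
    (hx : x ∈ Submodule.span ℂ (hM.eigenvectorBasis '' ↑S)) :
    RCLike.re (inner ℂ x (ff M x) : ℂ) ≤ c * ‖x‖ ^ 2 := by
  rw [quad_formula M hM, norm_sq_formula M hM, Finset.mul_sum]
  apply Finset.sum_le_sum
  intro k _
  by_cases hk : k ∈ S
  · exact mul_le_mul_of_nonneg_right (hc k hk) (by positivity)
  · rw [repr_vanish M hM ↑S x hx k hk]; simp

lemma finrank_span_basis_image (M : Matrix (Fin n) (Fin n) ℂ) (hM : M.IsHermitian)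
    (S : Finset (Fin n)) :
    Module.finrank ℂ (Submodule.span ℂ (hM.eigenvectorBasis '' ↑S)) = S.card := by
  have himg : Set.range (fun i : ↥(↑S : Set (Fin n)) => hM.eigenvectorBasis i)
      = hM.eigenvectorBasis '' ↑S := by
    rw [show (fun i : ↥(↑S : Set (Fin n)) => hM.eigenvectorBasis i)
        = hM.eigenvectorBasis ∘ Subtype.val from rfl, Set.range_comp, Subtype.range_coe]
  have hon := hM.eigenvectorBasis.orthonormal.comp
    (fun i : ↥(↑S : Set (Fin n)) => (i : Fin n)) Subtype.val_injective
  rw [← himg, finrank_span_eq_card (b := fun i : ↥(↑S : Set (Fin n)) => hM.eigenvectorBasis i)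
    hon.linearIndependent]
  exact Fintype.card_coe S
lemma weyl_one {n : ℕ} (A B : Matrix (Fin n) (Fin n) ℂ)
    (hA : A.IsHermitian) (hB : B.IsHermitian) (σA σB : Equiv.Perm (Fin n))
    (hσA : Antitone (hA.eigenvalues ∘ σA)) (hσB : Antitone (hB.eigenvalues ∘ σB))
    (j : Fin n) :
    hA.eigenvalues (σA j) - hB.eigenvalues (σB j) ≤ opNormC (A - B) := by
  classical
  set SA := (Finset.Iic j).image σA with hSA
  set SB := (Finset.Ici j).image σB with hSB
  set V := Submodule.span ℂ (hA.eigenvectorBasis '' ↑SA) with hV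
  set W := Submodule.span ℂ (hB.eigenvectorBasis '' ↑SB) with hW
  have hdim : Module.finrank ℂ (EuclideanSpace ℂ (Fin n))
      < Module.finrank ℂ V + Module.finrank ℂ W := by
    rw [finrank_euclideanSpace_fin, hV, hW, finrank_span_basis_image, finrank_span_basis_image,
      hSA, hSB, Finset.card_image_of_injective _ σA.injective,
      Finset.card_image_of_injective _ σB.injective, Fin.card_Iic, Fin.card_Ici]
    have := j.isLt; omega
  have hVW : 0 < Module.finrank ℂ ↥(V ⊓ W) := by
    have hsum := Submodule.finrank_sup_add_finrank_inf_eq V W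
    have hle : Module.finrank ℂ ↥(V ⊔ W) ≤ Module.finrank ℂ (EuclideanSpace ℂ (Fin n)) :=
      Submodule.finrank_le _
    omega
  have hne : V ⊓ W ≠ ⊥ := fun h => by rw [h, finrank_bot] at hVW; exact lt_irrefl 0 hVW
  obtain ⟨x, hxVW, hx0⟩ := Submodule.exists_mem_ne_zero_of_ne_bot hne
  obtain ⟨hxV, hxW⟩ := Submodule.mem_inf.1 hxVW
  have hx2 : (0:ℝ) < ‖x‖ ^ 2 := by
    have := norm_pos_iff.2 hx0; positivity
  have h1 : hA.eigenvalues (σA j) * ‖x‖ ^ 2 ≤ RCLike.re (inner ℂ x (ff A x) : ℂ) := by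
    refine quad_ge A hA SA _ ?_ x hxV
    intro k hk
    obtain ⟨i, hi, rfl⟩ := Finset.mem_image.1 hk
    exact hσA (Finset.mem_Iic.1 hi)
  have h2 : RCLike.re (inner ℂ x (ff B x) : ℂ) ≤ hB.eigenvalues (σB j) * ‖x‖ ^ 2 := by
    refine quad_le B hB SB _ ?_ x hxW
    intro k hk
    obtain ⟨i, hi, rfl⟩ := Finset.mem_image.1 hk
    exact hσB (Finset.mem_Ici.1 hi)
  have h3 : RCLike.re (inner ℂ x (ff (A - B) x) : ℂ)
      = RCLike.re (inner ℂ x (ff A x) : ℂ) - RCLike.re (inner ℂ x (ff B x) : ℂ) := by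
    have hsub : ff (A - B) = ff A - ff B := map_sub (toEuclideanCLM (𝕜 := ℂ)) A B
    rw [hsub, ContinuousLinearMap.sub_apply, inner_sub_right, map_sub]
  have h4 : RCLike.re (inner ℂ x (ff (A - B) x) : ℂ) ≤ opNormC (A - B) * ‖x‖ ^ 2 := by
    calc RCLike.re (inner ℂ x (ff (A - B) x) : ℂ) ≤ ‖(inner ℂ x (ff (A - B) x) : ℂ)‖ :=
        le_trans (le_abs_self _) (RCLike.abs_re_le_norm _)
      _ ≤ ‖x‖ * ‖ff (A - B) x‖ := norm_inner_le_norm _ _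
      _ ≤ ‖x‖ * (‖ff (A - B)‖ * ‖x‖) := by
          gcongr
          exact (ff (A - B)).le_opNorm x
      _ = opNormC (A - B) * ‖x‖ ^ 2 := by rw [opNormC]; ring
  have key : (hA.eigenvalues (σA j) - hB.eigenvalues (σB j)) * ‖x‖ ^ 2
      ≤ opNormC (A - B) * ‖x‖ ^ 2 := by nlinarith
  exact le_of_mul_le_mul_right key hx2

end WeylAux

/-- **Weyl's perturbation theorem.** If `A` and `B` are Hermitian `n × n` matrices with
eigenvalues listed in decreasing order, then `|λⱼ(A) - λⱼ(B)| ≤ ‖A - B‖` for every `j`. -/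
theorem weyl_perturbation {n : ℕ} (A B : Matrix (Fin n) (Fin n) ℂ)
    (hA : A.IsHermitian) (hB : B.IsHermitian)
    (σA σB : Equiv.Perm (Fin n))
    (hσA : Antitone (hA.eigenvalues ∘ σA)) (hσB : Antitone (hB.eigenvalues ∘ σB)) :
    ∀ j : Fin n, |hA.eigenvalues (σA j) - hB.eigenvalues (σB j)| ≤ opNormC (A - B) := by
  intro j
  rw [abs_sub_le_iff]
  refine ⟨weyl_one A B hA hB σA σB hσA hσB j, ?_⟩
  have h := weyl_one B A hB hA σB σA hσB hσA j
  have hnorm : opNormC (B - A) = opNormC (A - B) := by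
    rw [opNormC, opNormC, ← neg_sub A B, map_neg, norm_neg]
  linarith
end

section
/- Let Γₙ be a sequence of symmetric positive semidefinite d×d real matrices converging (in operator norm) to a symmetric positive semidefinite matrix Γ of rank r ≥ 1 with smallest nonzero eigenvalue Δᵣ > 0. Fix ε with 0 < ε < Δᵣ, and let Γ̊ₙ denote the ε-truncated spectral decomposition of Γₙ (keep eigenvalues > ε, set the rest to 0, same eigenvectors). Then the Moore–Penrose inverses satisfy Γ̊ₙ⁺ → Γ⁺ in operator norm. -/
open Matrix Filter

/-- `B` is the Moore–Penrose inverse of the real matrix `A`. -/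
def IsMoorePenrose {d e : ℕ} (A : Matrix (Fin d) (Fin e) ℝ) (B : Matrix (Fin e) (Fin d) ℝ) : Prop :=
  A * B * A = A ∧ B * A * B = B ∧ (A * B)ᵀ = A * B ∧ (B * A)ᵀ = B * A

/-- Operator (spectral) norm of a real square matrix. -/
noncomputable def opNorm {n : ℕ} (A : Matrix (Fin n) (Fin n) ℝ) : ℝ :=
  ‖Matrix.toEuclideanCLM (𝕜 := ℝ) A‖

section Aux

open Polynomial
open scoped Matrix.Norms.L2Operator

variable {d : ℕ}

lemma aux_opNorm_eq (A : Matrix (Fin d) (Fin d) ℝ) : opNorm A = ‖A‖ := rfl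

lemma aux_star_eq_transpose (A : Matrix (Fin d) (Fin d) ℝ) : star A = Aᵀ := by
  ext i j; simp [star_apply]

lemma aux_norm_orth_le_one [NeZero d] (R : Matrix (Fin d) (Fin d) ℝ)
    (h : Rᵀ * R = 1) : ‖R‖ ≤ 1 := by
  have := CStarRing.norm_star_mul_self (x := R)
  rw [aux_star_eq_transpose, h, norm_one] at this
  nlinarith [norm_nonneg R]

lemma aux_norm_conj_le [NeZero d] (R B : Matrix (Fin d) (Fin d) ℝ)
    (h1 : Rᵀ * R = 1) (h2 : R * Rᵀ = 1) : ‖R * B * Rᵀ‖ ≤ ‖B‖ :=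
  calc ‖R * B * Rᵀ‖ ≤ ‖R * B‖ * ‖Rᵀ‖ := norm_mul_le _ _
    _ ≤ ‖R * B‖ := mul_le_of_le_one_right (norm_nonneg _)
        (aux_norm_orth_le_one Rᵀ (by rwa [transpose_transpose]))
    _ ≤ ‖R‖ * ‖B‖ := norm_mul_le _ _
    _ ≤ 1 * ‖B‖ := mul_le_mul_of_nonneg_right (aux_norm_orth_le_one R h1) (norm_nonneg _)
    _ = ‖B‖ := one_mul _

lemma aux_norm_conj [NeZero d] (R A : Matrix (Fin d) (Fin d) ℝ)
    (h1 : Rᵀ * R = 1) (h2 : R * Rᵀ = 1) : ‖R * A * Rᵀ‖ = ‖A‖ := by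
  refine le_antisymm (aux_norm_conj_le R A h1 h2) ?_
  have key : Rᵀ * (R * A * Rᵀ) * (Rᵀ)ᵀ = A := by
    rw [transpose_transpose]
    calc Rᵀ * (R * A * Rᵀ) * R = (Rᵀ * R) * A * (Rᵀ * R) := by noncomm_ring
      _ = A := by rw [h1, one_mul, mul_one]
  calc ‖A‖ = ‖Rᵀ * (R * A * Rᵀ) * (Rᵀ)ᵀ‖ := by rw [key]
    _ ≤ ‖R * A * Rᵀ‖ := aux_norm_conj_le Rᵀ _ (by rwa [transpose_transpose]) h1

noncomputable def nE (x : Fin d → ℝ) : ℝ := ‖(WithLp.equiv 2 (Fin d → ℝ)).symm x‖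

lemma nE_eq (x : Fin d → ℝ) : nE x = Real.sqrt (∑ i, x i ^ 2) := by
  rw [nE, EuclideanSpace.norm_eq]
  congr 1; apply Finset.sum_congr rfl; intro i _
  rw [show ((WithLp.equiv 2 (Fin d → ℝ)).symm x).ofLp i = x i from rfl, Real.norm_eq_abs, sq_abs]

lemma nE_mulVec (A : Matrix (Fin d) (Fin d) ℝ) (x : Fin d → ℝ) :
    nE (A *ᵥ x) ≤ ‖A‖ * nE x :=
  l2_opNorm_mulVec A ((WithLp.equiv 2 (Fin d → ℝ)).symm x)

lemma nE_nonneg (x : Fin d → ℝ) : 0 ≤ nE x := norm_nonneg _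

lemma nE_single (j : Fin d) (a : ℝ) : nE (Pi.single j a) = |a| := by
  rw [nE_eq]
  have : ∀ i, (Pi.single j a : Fin d → ℝ) i ^ 2 = if i = j then a ^ 2 else 0 := by
    intro i; rcases eq_or_ne i j with h | h <;> simp [Pi.single_apply, h]
  simp_rw [this, Finset.sum_ite_eq' Finset.univ j (fun _ => a ^ 2), if_pos (Finset.mem_univ j)]
  exact Real.sqrt_sq_eq_abs a

lemma aux_norm_diagonal_le (v : Fin d → ℝ) (c : ℝ) (hc0 : 0 ≤ c) (hc : ∀ j, |v j| ≤ c) :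
    ‖diagonal v‖ ≤ c := by
  rw [cstar_norm_def]
  refine ContinuousLinearMap.opNorm_le_bound _ hc0 fun x => ?_
  have h1 : (toEuclideanCLM (𝕜 := ℝ) (diagonal v)) x
      = (WithLp.equiv 2 (Fin d → ℝ)).symm (diagonal v *ᵥ (WithLp.equiv 2 (Fin d → ℝ)) x) := rfl
  rw [h1]
  have h2 : ∀ y : Fin d → ℝ, ‖(WithLp.equiv 2 (Fin d → ℝ)).symm y‖ = nE y := fun y => rfl
  rw [h2]
  have h3 : ‖x‖ = nE ((WithLp.equiv 2 (Fin d → ℝ)) x) := rfl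
  rw [h3]
  set y := (WithLp.equiv 2 (Fin d → ℝ)) x with hy
  rw [nE_eq, nE_eq]
  have key : ∑ i, (diagonal v *ᵥ y) i ^ 2 ≤ c ^ 2 * ∑ i, y i ^ 2 := by
    rw [Finset.mul_sum]
    refine Finset.sum_le_sum fun i _ => ?_
    rw [mulVec_diagonal]
    have h4 : v i ^ 2 ≤ c ^ 2 := by
      have := pow_le_pow_left₀ (abs_nonneg (v i)) (hc i) 2
      rwa [sq_abs] at this
    calc (v i * y i) ^ 2 = v i ^ 2 * y i ^ 2 := by ring
      _ ≤ c ^ 2 * y i ^ 2 := mul_le_mul_of_nonneg_right h4 (sq_nonneg _)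
  calc Real.sqrt (∑ i, (diagonal v *ᵥ y) i ^ 2) ≤ Real.sqrt (c ^ 2 * ∑ i, y i ^ 2) :=
        Real.sqrt_le_sqrt key
    _ = c * Real.sqrt (∑ i, y i ^ 2) := by
        rw [Real.sqrt_mul (sq_nonneg c), Real.sqrt_sq hc0]

lemma abs_le_norm_diagonal (v : Fin d → ℝ) (j : Fin d) : |v j| ≤ ‖diagonal v‖ := by
  have h := nE_mulVec (diagonal v) (Pi.single j 1)
  rw [nE_single, abs_one, mul_one] at h
  have h2 : diagonal v *ᵥ Pi.single j 1 = Pi.single j (v j) := by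
    ext i; rw [mulVec_diagonal]
    rcases eq_or_ne i j with h | h <;> simp [Pi.single_apply, h]
  rwa [h2, nE_single] at h

lemma isMoorePenrose_unique {A B C : Matrix (Fin d) (Fin d) ℝ}
    (hB : IsMoorePenrose A B) (hC : IsMoorePenrose A C) : B = C := by
  obtain ⟨hB1, hB2, hB3, hB4⟩ := hB
  obtain ⟨hC1, hC2, hC3, hC4⟩ := hC
  have hAT : Aᵀ = Aᵀ * (Cᵀ * Aᵀ) := by
    conv_lhs => rw [← hC1, transpose_mul, transpose_mul]
  have hAT' : Aᵀ = (Aᵀ * Cᵀ) * Aᵀ := by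
    conv_lhs => rw [← hC1, transpose_mul, transpose_mul, ← mul_assoc]
  have hAB : A * B = A * C := by
    calc A * B = Bᵀ * Aᵀ := by rw [← hB3, transpose_mul]
      _ = Bᵀ * (Aᵀ * (Cᵀ * Aᵀ)) := by rw [← hAT]
      _ = (Bᵀ * Aᵀ) * (Cᵀ * Aᵀ) := by rw [← mul_assoc]
      _ = (A * B)ᵀ * (A * C)ᵀ := by rw [transpose_mul, transpose_mul]
      _ = (A * B) * (A * C) := by rw [hB3, hC3]
      _ = (A * B * A) * C := by noncomm_ring
      _ = A * C := by rw [hB1]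
  have hBA : B * A = C * A := by
    calc B * A = Aᵀ * Bᵀ := by rw [← hB4, transpose_mul]
      _ = ((Aᵀ * Cᵀ) * Aᵀ) * Bᵀ := by rw [← hAT']
      _ = (Aᵀ * Cᵀ) * (Aᵀ * Bᵀ) := by rw [mul_assoc]
      _ = (C * A)ᵀ * (B * A)ᵀ := by rw [transpose_mul, transpose_mul]
      _ = (C * A) * (B * A) := by rw [hB4, hC4]
      _ = C * (A * B * A) := by noncomm_ring
      _ = C * A := by rw [hB1]
  calc B = B * A * B := hB2.symm
    _ = B * (A * C) := by rw [mul_assoc, hAB]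
    _ = (B * A) * C := by rw [← mul_assoc]
    _ = C * A * C := by rw [hBA]
    _ = C := hC2

lemma conj_mul_conj (R A B : Matrix (Fin d) (Fin d) ℝ) (h1 : Rᵀ * R = 1) :
    (R * A * Rᵀ) * (R * B * Rᵀ) = R * (A * B) * Rᵀ := by
  calc (R * A * Rᵀ) * (R * B * Rᵀ) = R * A * (Rᵀ * R) * B * Rᵀ := by noncomm_ring
    _ = R * (A * B) * Rᵀ := by rw [h1]; noncomm_ring

lemma conj_diag_transpose (R : Matrix (Fin d) (Fin d) ℝ) (a : Fin d → ℝ) :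
    (R * diagonal a * Rᵀ)ᵀ = R * diagonal a * Rᵀ := by
  rw [transpose_mul, transpose_mul, transpose_transpose, diagonal_transpose]
  noncomm_ring

lemma isMoorePenrose_conj_diag (R : Matrix (Fin d) (Fin d) ℝ) (v w : Fin d → ℝ)
    (h1 : Rᵀ * R = 1)
    (hvw : ∀ j, v j * w j * v j = v j) (hwv : ∀ j, w j * v j * w j = w j) :
    IsMoorePenrose (R * diagonal v * Rᵀ) (R * diagonal w * Rᵀ) := by
  have key : ∀ a b : Fin d → ℝ,
      (R * diagonal a * Rᵀ) * (R * diagonal b * Rᵀ) = R * diagonal (fun j => a j * b j) * Rᵀ := by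
    intro a b; rw [conj_mul_conj R _ _ h1, diagonal_mul_diagonal]
  refine ⟨?_, ?_, ?_, ?_⟩
  · rw [key, key, show (fun j => (v j * w j) * v j) = v from funext hvw]
  · rw [key, key, show (fun j => (w j * v j) * w j) = w from funext hwv]
  · rw [key, conj_diag_transpose]
  · rw [key, conj_diag_transpose]

lemma conjT_pow (R D : Matrix (Fin d) (Fin d) ℝ) (h1 : Rᵀ * R = 1) (h2 : R * Rᵀ = 1)
    (k : ℕ) : (R * D * Rᵀ) ^ k = R * D ^ k * Rᵀ := by
  induction k with
  | zero => simp [pow_zero, mul_one, h2]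
  | succ n ih =>
      rw [pow_succ, ih, pow_succ]
      calc R * D ^ n * Rᵀ * (R * D * Rᵀ) = R * D ^ n * (Rᵀ * R) * D * Rᵀ := by noncomm_ring
        _ = R * (D ^ n * D) * Rᵀ := by rw [h1]; noncomm_ring

lemma diagonal_sum_smul_pow (p : ℝ[X]) (v : Fin d → ℝ) :
    ∑ i ∈ Finset.range (p.natDegree + 1), p.coeff i • (diagonal v) ^ i
      = diagonal (fun j => p.eval (v j)) := by
  have : ∀ j, p.eval (v j) = ∑ i ∈ Finset.range (p.natDegree + 1), p.coeff i * (v j) ^ i :=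
    fun j => p.eval_eq_sum_range (x := v j)
  simp_rw [this, diagonal_pow]
  ext a b
  simp only [Finset.sum_apply, Matrix.sum_apply, Matrix.smul_apply, diagonal_apply, smul_eq_mul]
  rcases eq_or_ne a b with h | h
  · simp [h]
  · simp [h]

lemma aeval_conj (R : Matrix (Fin d) (Fin d) ℝ) (v : Fin d → ℝ)
    (h1 : Rᵀ * R = 1) (h2 : R * Rᵀ = 1) (p : ℝ[X]) :
    aeval (R * diagonal v * Rᵀ) p = R * diagonal (fun j => p.eval (v j)) * Rᵀ := by
  rw [aeval_eq_sum_range, ← diagonal_sum_smul_pow p v]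
  rw [Finset.mul_sum, Finset.sum_mul]
  refine Finset.sum_congr rfl fun i _ => ?_
  rw [conjT_pow R _ h1 h2, mul_smul_comm, smul_mul_assoc]

lemma nE_orth [NeZero d] (Q : Matrix (Fin d) (Fin d) ℝ)
    (h1 : Qᵀ * Q = 1) (h2 : Q * Qᵀ = 1) (y : Fin d → ℝ) : nE (Q *ᵥ y) = nE y := by
  have le1 : nE (Q *ᵥ y) ≤ nE y := by
    have := nE_mulVec Q y
    have h := aux_norm_orth_le_one Q h1
    nlinarith [nE_nonneg y]
  have le2 : nE y ≤ nE (Q *ᵥ y) := by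
    have e : Qᵀ *ᵥ (Q *ᵥ y) = y := by rw [mulVec_mulVec, h1, one_mulVec]
    have := nE_mulVec Qᵀ (Q *ᵥ y)
    rw [e] at this
    have h := aux_norm_orth_le_one Qᵀ (by rwa [transpose_transpose])
    nlinarith [nE_nonneg (Q *ᵥ y)]
  linarith

lemma spectral_real (Γ : Matrix (Fin d) (Fin d) ℝ) (hΓ : Γ.IsHermitian) :
    Γ = (hΓ.eigenvectorUnitary : Matrix (Fin d) (Fin d) ℝ) * diagonal hΓ.eigenvalues
      * (hΓ.eigenvectorUnitary : Matrix (Fin d) (Fin d) ℝ)ᵀ := by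
  have h := hΓ.spectral_theorem
  rw [Unitary.conjStarAlgAut_apply, aux_star_eq_transpose] at h
  simpa using h

lemma orth_transpose_mul_self (Q : Matrix (Fin d) (Fin d) ℝ)
    (hQ : Q ∈ Matrix.orthogonalGroup (Fin d) ℝ) : Qᵀ * Q = 1 ∧ Q * Qᵀ = 1 := by
  constructor
  · rw [← aux_star_eq_transpose]; exact (Matrix.mem_orthogonalGroup_iff' (Fin d) ℝ).mp hQ
  · rw [← aux_star_eq_transpose]; exact (Matrix.mem_orthogonalGroup_iff (Fin d) ℝ).mp hQ

lemma exists_eigen_near [NeZero d] (B Γ : Matrix (Fin d) (Fin d) ℝ) (hΓ : Γ.IsHermitian)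
    (u : Fin d → ℝ) (t : ℝ) (hu : nE u = 1) (heig : B *ᵥ u = t • u) :
    ∃ i, |hΓ.eigenvalues i - t| ≤ ‖B - Γ‖ := by
  set Q : Matrix (Fin d) (Fin d) ℝ := (hΓ.eigenvectorUnitary : Matrix (Fin d) (Fin d) ℝ) with hQdef
  have hQmem : Q ∈ Matrix.orthogonalGroup (Fin d) ℝ := hΓ.eigenvectorUnitary.2
  obtain ⟨h1, h2⟩ := orth_transpose_mul_self Q hQmem
  set lam := hΓ.eigenvalues with hlam
  have keyA : (Γ - t • (1 : Matrix (Fin d) (Fin d) ℝ)) *ᵥ u = (Γ - B) *ᵥ u := by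
    rw [sub_mulVec, sub_mulVec, smul_mulVec, one_mulVec, heig]
  have hupper : nE ((Γ - t • (1 : Matrix (Fin d) (Fin d) ℝ)) *ᵥ u) ≤ ‖B - Γ‖ := by
    rw [keyA]
    calc nE ((Γ - B) *ᵥ u) ≤ ‖Γ - B‖ * nE u := nE_mulVec _ _
      _ = ‖B - Γ‖ := by rw [hu, mul_one, norm_sub_rev]
  have hdecomp : Γ - t • (1 : Matrix (Fin d) (Fin d) ℝ)
      = Q * diagonal (fun i => lam i - t) * Qᵀ := by
    have h3 := spectral_real Γ hΓ
    have h4 : t • (1 : Matrix (Fin d) (Fin d) ℝ) = Q * diagonal (fun _ => t) * Qᵀ := by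
      have : diagonal (fun _ : Fin d => t) = t • (1 : Matrix (Fin d) (Fin d) ℝ) := by
        ext i j
        rcases eq_or_ne i j with h | h <;>
          simp [diagonal_apply, h, Matrix.smul_apply, Matrix.one_apply]
      rw [this, mul_smul_comm, smul_mul_assoc, mul_one, h2]
    rw [← diagonal_sub]
    · conv_lhs => rw [h3, h4]
      rw [mul_sub, sub_mul]
  have hnw : nE (Qᵀ *ᵥ u) = 1 := by
    rw [nE_orth Qᵀ (by rwa [transpose_transpose]) h1, hu]
  obtain ⟨i₀, _, hmin⟩ := Finset.exists_min_image Finset.univ (fun i => |lam i - t|)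
    ⟨Classical.arbitrary (Fin d), Finset.mem_univ _⟩
  refine ⟨i₀, le_trans ?_ hupper⟩
  rw [hdecomp, ← mulVec_mulVec, ← mulVec_mulVec, nE_orth Q h1 h2]
  set y := Qᵀ *ᵥ u with hy
  rw [nE_eq]
  have hsum : ∑ i, y i ^ 2 = 1 := by
    have := hnw
    rw [nE_eq] at this
    have h0 : (0:ℝ) ≤ ∑ i, y i ^ 2 := Finset.sum_nonneg fun i _ => sq_nonneg _
    nlinarith [Real.sq_sqrt h0]
  have hlow : |lam i₀ - t| ^ 2 ≤ ∑ i, (diagonal (fun i => lam i - t) *ᵥ y) i ^ 2 := by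
    calc |lam i₀ - t| ^ 2 = |lam i₀ - t| ^ 2 * ∑ i, y i ^ 2 := by rw [hsum, mul_one]
      _ = ∑ i, |lam i₀ - t| ^ 2 * y i ^ 2 := Finset.mul_sum _ _ _
      _ ≤ ∑ i, (diagonal (fun i => lam i - t) *ᵥ y) i ^ 2 := by
          refine Finset.sum_le_sum fun i _ => ?_
          rw [mulVec_diagonal]
          have hm := hmin i (Finset.mem_univ i)
          have h5 : |lam i₀ - t| ^ 2 ≤ |lam i - t| ^ 2 :=
            pow_le_pow_left₀ (abs_nonneg _) hm 2
          calc |lam i₀ - t| ^ 2 * y i ^ 2 ≤ |lam i - t| ^ 2 * y i ^ 2 :=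
                mul_le_mul_of_nonneg_right h5 (sq_nonneg _)
            _ = ((lam i - t) * y i) ^ 2 := by rw [sq_abs]; ring
  calc |lam i₀ - t| = Real.sqrt (|lam i₀ - t| ^ 2) := (Real.sqrt_sq (abs_nonneg _)).symm
    _ ≤ Real.sqrt (∑ i, (diagonal (fun i => lam i - t) *ᵥ y) i ^ 2) := Real.sqrt_le_sqrt hlow

lemma column_unit_eigen [NeZero d] (B R : Matrix (Fin d) (Fin d) ℝ) (Δ : Fin d → ℝ)
    (h1 : Rᵀ * R = 1) (h2 : R * Rᵀ = 1)
    (hdec : B = R * diagonal Δ * Rᵀ) (j : Fin d) :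
    B *ᵥ (R *ᵥ Pi.single j 1) = Δ j • (R *ᵥ Pi.single j 1) ∧ nE (R *ᵥ Pi.single j 1) = 1 := by
  constructor
  · rw [hdec]
    have c1 : (R * diagonal Δ * Rᵀ) *ᵥ (R *ᵥ Pi.single j 1)
        = R *ᵥ (diagonal Δ *ᵥ Pi.single j 1) := by
      rw [mulVec_mulVec, mul_assoc (R * diagonal Δ), h1, mul_one, ← mulVec_mulVec]
    rw [c1]
    have e1 : diagonal Δ *ᵥ Pi.single j 1 = Pi.single j (Δ j) := by
      ext i; rw [mulVec_diagonal]
      rcases eq_or_ne i j with h | h <;> simp [Pi.single_apply, h]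
    rw [e1]
    have e2 : (Pi.single j (Δ j) : Fin d → ℝ) = Δ j • (Pi.single j 1 : Fin d → ℝ) := by
      ext i; rcases eq_or_ne i j with h | h <;> simp [Pi.single_apply, h]
    rw [e2, mulVec_smul]
  · rw [nE_orth R h1 h2, nE_single, abs_one]

end Aux

open scoped Matrix.Norms.L2Operator

/-- If `Γₙ → Γ` in operator norm, where all matrices are symmetric PSD, `Γ` has rank `r ≥ 1`
and all nonzero eigenvalues of `Γ` exceed `ε > 0`, then the Moore–Penrose inverses of the
`ε`-truncated spectral decompositions `Γ̊ₙ` of `Γₙ` converge in operator norm to `Γ⁺`. -/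
theorem truncated_svd_pinv_tendsto {d : ℕ}
    (Γseq : ℕ → Matrix (Fin d) (Fin d) ℝ) (Γ : Matrix (Fin d) (Fin d) ℝ)
    (hΓn : ∀ n, (Γseq n).PosSemidef) (hΓ : Γ.PosSemidef)
    (r : ℕ) (hr : 1 ≤ r) (hrank : Γ.rank = r)
    (ε : ℝ) (hε : 0 < ε)
    (hgap : ∀ j : Fin d, hΓ.1.eigenvalues j = 0 ∨ ε < hΓ.1.eigenvalues j)
    -- spectral decompositions `Γₙ = Rₙ Δₙ Rₙᵀ`
    (R : ℕ → Matrix (Fin d) (Fin d) ℝ) (hR : ∀ n, R n ∈ Matrix.orthogonalGroup (Fin d) ℝ)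
    (Δ : ℕ → Fin d → ℝ)
    (hdecomp : ∀ n, Γseq n = R n * Matrix.diagonal (Δ n) * (R n)ᵀ)
    -- the `ε`-truncated matrices `Γ̊ₙ`
    (Γtr : ℕ → Matrix (Fin d) (Fin d) ℝ)
    (hΓtr : ∀ n, Γtr n =
      R n * Matrix.diagonal (fun j => if ε < Δ n j then Δ n j else 0) * (R n)ᵀ)
    -- Moore–Penrose inverses
    (Gn : ℕ → Matrix (Fin d) (Fin d) ℝ) (hGn : ∀ n, IsMoorePenrose (Γtr n) (Gn n))
    (G : Matrix (Fin d) (Fin d) ℝ) (hG : IsMoorePenrose Γ G)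
    -- convergence of `Γₙ` to `Γ` in operator norm
    (hconv : Tendsto (fun n => opNorm (Γseq n - Γ)) atTop (nhds 0)) :
    Tendsto (fun n => opNorm (Gn n - G)) atTop (nhds 0) := by
  classical
  set lam := hΓ.1.eigenvalues with hlamdef
  have hex : ∃ i, lam i ≠ 0 := by
    by_contra h
    push_neg at h
    have hcard : Fintype.card {i // lam i ≠ 0} = 0 := by
      simp only [Fintype.card_eq_zero_iff]
      exact ⟨fun x => x.2 (h x.1)⟩
    have h2 := hΓ.1.rank_eq_card_non_zero_eigs
    rw [hrank, ← hlamdef, hcard] at h2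
    omega
  obtain ⟨i₀, hi₀⟩ := hex
  haveI : NeZero d := ⟨(Fin.pos i₀).ne'⟩
  have hlam0 : ∀ i, 0 ≤ lam i := fun i => hΓ.eigenvalues_nonneg i
  set S : Finset (Fin d) := Finset.univ.filter (fun i => lam i ≠ 0) with hSdef
  have hSne : S.Nonempty := ⟨i₀, by simp [hSdef, hi₀]⟩
  set Δr : ℝ := (S.image lam).min' (hSne.image lam) with hΔrdef
  have hΔr_le : ∀ i, lam i ≠ 0 → Δr ≤ lam i := fun i hi =>
    Finset.min'_le _ _ (Finset.mem_image_of_mem lam (by simp [hSdef, hi]))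
  have hεΔr : ε < Δr := by
    have hmem := Finset.min'_mem (S.image lam) (hSne.image lam)
    rw [Finset.mem_image] at hmem
    obtain ⟨i, hiS, hi⟩ := hmem
    have hine : lam i ≠ 0 := by simpa [hSdef] using hiS
    rcases hgap i with h | h
    · exact absurd h hine
    · exact lt_of_lt_of_eq h (hi.trans hΔrdef.symm)
  set ρ : ℝ := min (ε/2) ((Δr - ε)/2) with hρdef
  have hρpos : 0 < ρ := lt_min (by linarith) (by linarith)
  have hρε : ρ ≤ ε/2 := min_le_left _ _
  have hρΔ : ρ ≤ (Δr - ε)/2 := min_le_right _ _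
  set b : ℝ := Δr - ρ with hbdef
  have hεb : ε < b := by rw [hbdef]; linarith
  have hab : ρ < b := by linarith
  have hbpos : 0 < b := lt_trans hε hεb
  have hbΔr : b ≤ Δr := by rw [hbdef]; linarith
  set f : ℝ → ℝ := fun t => (min (max t ρ) b - ρ) / (b - ρ) * (max t b)⁻¹ with hfdef
  have hf0 : ∀ t, t ≤ ρ → f t = 0 := by
    intro t ht
    simp only [hfdef]
    rw [max_eq_right ht, min_eq_left hab.le, sub_self, zero_div, zero_mul]
  have hfinv : ∀ t, b ≤ t → f t = t⁻¹ := by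
    intro t ht
    simp only [hfdef]
    rw [max_eq_left (le_trans hab.le ht), min_eq_right ht,
      div_self (by linarith : b - ρ ≠ 0), one_mul, max_eq_left ht]
  have hfc : Continuous f := by
    apply Continuous.mul
    · exact (((continuous_id.max continuous_const).min continuous_const).sub
        continuous_const).div_const _
    · exact Continuous.inv₀ (continuous_id.max continuous_const)
        (fun t => ne_of_gt (lt_of_lt_of_le hbpos (le_max_right _ _)))
  have hline : ∀ i, lam i = 0 ∨ Δr ≤ lam i := fun i =>
    (eq_or_ne (lam i) 0).imp id (hΔr_le i)
  -- identify G
  set Q : Matrix (Fin d) (Fin d) ℝ := (hΓ.1.eigenvectorUnitary : Matrix (Fin d) (Fin d) ℝ)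
    with hQdef
  obtain ⟨hQ1, hQ2⟩ := orth_transpose_mul_self Q hΓ.1.eigenvectorUnitary.2
  have hspec : Γ = Q * diagonal lam * Qᵀ := spectral_real Γ hΓ.1
  have hprod : ∀ t : ℝ, (t = 0 ∨ b ≤ t) → t * f t * t = t ∧ f t * t * f t = f t := by
    intro t ht
    rcases ht with h | h
    · rw [h, hf0 0 hρpos.le]; norm_num
    · rw [hfinv t h]
      have htne : t ≠ 0 := (lt_of_lt_of_le hbpos h).ne'
      constructor
      · field_simp
      · field_simp
  have hGid : G = Q * diagonal (fun i => f (lam i)) * Qᵀ := by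
    refine isMoorePenrose_unique hG ?_
    conv in Γ => rw [hspec]
    apply isMoorePenrose_conj_diag Q lam _ hQ1
    · intro j
      exact (hprod (lam j) ((hline j).imp id (le_trans hbΔr))).1
    · intro j
      exact (hprod (lam j) ((hline j).imp id (le_trans hbΔr))).2
  have hnormlam : ∀ i, |lam i| ≤ ‖Γ‖ := by
    intro i
    calc |lam i| ≤ ‖diagonal lam‖ := abs_le_norm_diagonal lam i
      _ = ‖Q * diagonal lam * Qᵀ‖ := (aux_norm_conj Q _ hQ1 hQ2).symm
      _ = ‖Γ‖ := by rw [← hspec]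
  set M : ℝ := ‖Γ‖ + ρ with hMdef
  have hM0 : 0 ≤ M := add_nonneg (norm_nonneg _) hρpos.le
  have hconv' : Tendsto (fun n => ‖Γseq n - Γ‖) atTop (nhds 0) := hconv
  have htends : Tendsto Γseq atTop (nhds Γ) :=
    tendsto_iff_norm_sub_tendsto_zero.mpr hconv'
  rw [Metric.tendsto_nhds]
  intro η hη
  have hη3 : 0 < η/3 := by linarith
  obtain ⟨p, hp⟩ := exists_polynomial_near_of_continuousOn (-M) M f
    hfc.continuousOn (η/3) hη3
  have hev1 : ∀ᶠ n in atTop, ‖Γseq n - Γ‖ < ρ := by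
    have h2 := Metric.tendsto_nhds.mp hconv' ρ hρpos
    filter_upwards [h2] with n hn
    rwa [dist_zero_right, Real.norm_eq_abs, abs_of_nonneg (norm_nonneg _)] at hn
  have hev2 : ∀ᶠ n in atTop,
      ‖Polynomial.aeval (Γseq n) p - Polynomial.aeval Γ p‖ < η/3 := by
    have hcont : Tendsto (fun n => Polynomial.aeval (Γseq n) p) atTop
        (nhds (Polynomial.aeval Γ p)) :=
      (p.continuous_aeval.tendsto Γ).comp htends
    have h2 := Metric.tendsto_nhds.mp hcont (η/3) hη3
    filter_upwards [h2] with n hn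
    rwa [dist_eq_norm] at hn
  filter_upwards [hev1, hev2] with n hn1 hn2
  obtain ⟨hR1, hR2⟩ := orth_transpose_mul_self (R n) (hR n)
  have hclass : ∀ j, (Δ n j ≤ ρ ∨ b ≤ Δ n j) ∧ |Δ n j| ≤ M := by
    intro j
    obtain ⟨heig, hunit⟩ := column_unit_eigen (Γseq n) (R n) (Δ n) hR1 hR2 (hdecomp n) j
    obtain ⟨i, hi⟩ := exists_eigen_near (Γseq n) Γ hΓ.1 _ (Δ n j) hunit heig
    have hiρ : |lam i - Δ n j| < ρ := lt_of_le_of_lt hi hn1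
    have habs := abs_lt.mp hiρ
    have hMj : |Δ n j| ≤ M := by
      have h3 := hnormlam i
      have h4 : |Δ n j| - |lam i| ≤ |Δ n j - lam i| := abs_sub_abs_le_abs_sub _ _
      rw [abs_sub_comm] at hiρ
      rw [hMdef]
      have h5 := abs_nonneg (Δ n j - lam i)
      linarith [le_of_lt hiρ]
    refine ⟨?_, hMj⟩
    rcases hline i with h | h
    · left
      rw [h, zero_sub, abs_neg] at hiρ
      linarith [le_abs_self (Δ n j)]
    · right
      rw [hbdef]
      linarith [habs.2]
  have hGnid : Gn n = R n * diagonal (fun j => f (Δ n j)) * (R n)ᵀ := by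
    refine isMoorePenrose_unique (hGn n) ?_
    rw [hΓtr n]
    have hcond : ∀ j, (if ε < Δ n j then Δ n j else 0) * f (Δ n j) = f (Δ n j) * (if ε < Δ n j then Δ n j else 0) := fun j => mul_comm _ _
    have key : ∀ j, ((if ε < Δ n j then Δ n j else 0) = Δ n j ∧ b ≤ Δ n j)
        ∨ ((if ε < Δ n j then Δ n j else 0) = 0 ∧ f (Δ n j) = 0) := by
      intro j
      rcases (hclass j).1 with h | h
      · right
        have : ¬ ε < Δ n j := by push_neg; linarith
        exact ⟨if_neg this, hf0 _ h⟩
      · left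
        exact ⟨if_pos (lt_of_lt_of_le hεb h), h⟩
    apply isMoorePenrose_conj_diag _ _ _ hR1
    · intro j
      rcases key j with ⟨h1, h2⟩ | ⟨h1, h2⟩
      · rw [h1]
        exact (hprod (Δ n j) (Or.inr h2)).1
      · rw [h1]; ring
    · intro j
      rcases key j with ⟨h1, h2⟩ | ⟨h1, h2⟩
      · rw [h1]
        exact (hprod (Δ n j) (Or.inr h2)).2
      · rw [h1, h2]; ring
  have hPn : Polynomial.aeval (Γseq n) p
      = R n * diagonal (fun j => p.eval (Δ n j)) * (R n)ᵀ := by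
    conv_lhs => rw [hdecomp n]
    exact aeval_conj _ _ hR1 hR2 p
  have hP : Polynomial.aeval Γ p = Q * diagonal (fun i => p.eval (lam i)) * Qᵀ := by
    conv_lhs => rw [hspec]
    exact aeval_conj _ _ hQ1 hQ2 p
  have conj_sub : ∀ (O : Matrix (Fin d) (Fin d) ℝ) (v w : Fin d → ℝ),
      O * diagonal v * Oᵀ - O * diagonal w * Oᵀ = O * diagonal (fun j => v j - w j) * Oᵀ := by
    intro O v w
    rw [← diagonal_sub, mul_sub, sub_mul]
  have hb1 : ‖Gn n - Polynomial.aeval (Γseq n) p‖ ≤ η/3 := by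
    rw [hGnid, hPn, conj_sub, aux_norm_conj _ _ hR1 hR2]
    apply aux_norm_diagonal_le _ _ hη3.le
    intro j
    have hj : Δ n j ∈ Set.Icc (-M) M := by
      have := abs_le.mp (hclass j).2
      exact ⟨this.1, this.2⟩
    have := hp _ hj
    rw [abs_sub_comm] at this
    exact this.le
  have hb3 : ‖Polynomial.aeval Γ p - G‖ ≤ η/3 := by
    rw [hGid, hP, conj_sub, aux_norm_conj _ _ hQ1 hQ2]
    apply aux_norm_diagonal_le _ _ hη3.le
    intro i
    have hj : lam i ∈ Set.Icc (-M) M := by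
      have hΓM : ‖Γ‖ ≤ M := by linarith [hρpos]
      have h3 := abs_le.mp (le_trans (hnormlam i) hΓM)
      exact ⟨h3.1, h3.2⟩
    exact (hp _ hj).le
  have hfinal : ‖Gn n - G‖ < η := by
    have hsplit : Gn n - G = (Gn n - Polynomial.aeval (Γseq n) p)
        + (Polynomial.aeval (Γseq n) p - Polynomial.aeval Γ p)
        + (Polynomial.aeval Γ p - G) := by abel
    calc ‖Gn n - G‖ ≤ ‖Gn n - Polynomial.aeval (Γseq n) p‖
          + ‖Polynomial.aeval (Γseq n) p - Polynomial.aeval Γ p‖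
          + ‖Polynomial.aeval Γ p - G‖ := by
          rw [hsplit]
          exact le_trans (norm_add_le _ _) (by linarith [norm_add_le (Gn n - Polynomial.aeval (Γseq n) p) (Polynomial.aeval (Γseq n) p - Polynomial.aeval Γ p)])
      _ < η := by linarith
  rw [dist_zero_right, aux_opNorm_eq, Real.norm_eq_abs, abs_of_nonneg (norm_nonneg _)]
  exact hfinal
end
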